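/- Fix w ∈ Sₙ, let v ↦ v' be the greedy operation associated to w, and let v ∈ Sₙ satisfy v' ≠ w. Then there exist indices q < p such that (v(p), v(q)) ∈ Ref(w). Consequently C(v) is not contained in {x ∈ ℝⁿ : x_b ≥ x_a for all (a,b) ∈ Ref(w)}. -/

import Mathlib

/-!
If `v` inverts no pair of `Ref(w)`, then `v⁻¹` increases along `Ref(w)`, hence along every
inversion of `w`: an inversion is a chain of covering inversions, and a covering transposition
lowers the length by exactly one. The greedy operation then picks `v⁻¹ (w d)` at every step `d`:
this index is admissible, and a smaller admissible index would carry a value `w j < w d` with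
`j > d`, an inversion of `w` along which `v⁻¹` decreases. Hence `v' = w`. Finally the point
`x = (v⁻¹ k)ₖ` of `C(v)` violates `x_a ≤ x_b` on the pair of `Ref(w)` inverted by `v`.
-/

namespace SchubertToric

open Equiv

/-- The number of inversions (= the length `ℓ`) of a permutation. -/
def invCount {n : ℕ} (w : Equiv.Perm (Fin n)) : ℕ :=
  ((Finset.univ : Finset (Fin n × Fin n)).filter fun p => p.1 < p.2 ∧ w p.2 < w p.1).card

/-- `initSeg w d` is the set `{w(1), …, w(d)}` (0-indexed: images of the first `d` indices). -/
def initSeg {n : ℕ} (w : Equiv.Perm (Fin n)) (d : ℕ) : Finset (Fin n) :=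
  (Finset.univ.filter fun i : Fin n => (i : ℕ) < d).image w

/-- `domLE S T`: the increasing rearrangement of `S` is componentwise ≤ that of `T`. -/
def domLE {n : ℕ} (S T : Finset (Fin n)) : Prop :=
  List.Forall₂ (· ≤ ·) (S.sort (· ≤ ·)) (T.sort (· ≤ ·))

/-- Bruhat order on `
Sₙ`, via the tableau criterion. -/
def bruhatLE {n : ℕ} (v w : Equiv.Perm (Fin n)) : Prop :=
  ∀ d : ℕ, domLE (initSeg v d) (initSeg w d)

/-- `GreedyRel w v vp` says that `vp = v'`, the result of the greedy operation associated
to `w`: there is a sequence of indices `idx 0, idx 1, …`, each chosen as the *least* index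
not previously chosen such that the increasing rearrangement of the previously chosen values
together with the new value is componentwise at most `{w(1),…,w(d)}`, and `vp d = v (idx d)`. -/
def GreedyRel {n : ℕ} (w v vp : Equiv.Perm (Fin n)) : Prop :=
  ∃ idx : Fin n → Fin n,
    (∀ d : Fin n, vp d = v (idx d)) ∧
    ∀ d : Fin n,
      IsLeast {i : Fin n |
        (∀ e : Fin n, e < d → idx e ≠ i) ∧
        domLE (insert (v i)
            ((Finset.univ.filter fun e : Fin n => e < d).image fun e => v (idx e)))
          (initSeg w ((d : ℕ) + 1))}
        (idx d)

/-- Right weak order: `rightWeakLE u v` iff `v = u·s_{i₁}⋯s_{i_k}` with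
`ℓ(u·s_{i₁}⋯s_{i_j}) = ℓ(u) + j` for all `0 ≤ j ≤ k`. -/
def rightWeakLE {n : ℕ} (u v : Equiv.Perm (Fin n)) : Prop :=
  ∃ L : List (Equiv.Perm (Fin n)),
    (∀ s ∈ L, ∃ (i : Fin n) (h : (i : ℕ) + 1 < n), s = Equiv.swap i ⟨(i : ℕ) + 1, h⟩) ∧
    v = u * L.prod ∧
    ∀ k ≤ L.length, invCount (u * (L.take k).prod) = invCount u + k

/-- `Ref(w) = {(w(i),w(j)) : i < j, ℓ(w) − ℓ(t_{w(i),w(j)}·w) = 1}`. -/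
def RefSet {n : ℕ} (w : Equiv.Perm (Fin n)) : Set (Fin n × Fin n) :=
  {p | ∃ i j : Fin n, i < j ∧ p = (w i, w j) ∧
    invCount (Equiv.swap (w i) (w j) * w) + 1 = invCount w}

/-- The (undirected) graph `Γ_w` on `Fin n` whose edges are the pairs in `Ref(w)`. -/
def refGraph {n : ℕ} (w : Equiv.Perm (Fin n)) : SimpleGraph (Fin n) :=
  SimpleGraph.fromRel fun a b => (a, b) ∈ RefSet w

/-- The vertices of `Γ_w`: the integers occurring in pairs of `Ref(w)`. -/
def refVerts {n : ℕ} (w : Equiv.Perm (Fin n)) : Set (Fin n) :=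
  {a | ∃ b, (a, b) ∈ RefSet w ∨ (b, a) ∈ RefSet w}

/-- The cone `C(v) = {x ∈ ℝⁿ : x_{v(1)} ≤ x_{v(2)} ≤ ⋯ ≤ x_{v(n)}}`. -/
def coneC {n : ℕ} (v : Equiv.Perm (Fin n)) : Set (Fin n → ℝ) :=
  {x | ∀ i j : Fin n, i ≤ j → x (v i) ≤ x (v j)}

/-- `Ẽ_w(u) = {(u(i),u(j)) : i < j, t_{u(i),u(j)}·u ≤ w, |ℓ(u) − ℓ(t_{u(i),u(j)}·u)| = 1}`. -/
def Etil {n : ℕ} (w u : Equiv.Perm (Fin n)) : Set (Fin n × Fin n) :=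
  {p | ∃ i j : Fin n, i < j ∧ p = (u i, u j) ∧
    bruhatLE (Equiv.swap (u i) (u j) * u) w ∧
    (invCount (Equiv.swap (u i) (u j) * u) + 1 = invCount u ∨
      invCount u + 1 = invCount (Equiv.swap (u i) (u j) * u))}

/-- An element `p = (a,b)` of `Ẽ_w(u)` is decomposable if it is a sum (under
`(a,b)+(b,c) = (a,c)`) of two or more other elements of `Ẽ_w(u)`. -/
def Decomposable {n : ℕ} (w u : Equiv.Perm (Fin n)) (p : Fin n × Fin n) : Prop :=
  ∃ (m : ℕ) (c : ℕ → Fin n), 2 ≤ m ∧ c 0 = p.1 ∧ c m = p.2 ∧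
    ∀ i < m, (c i, c (i + 1)) ∈ Etil w u ∧ (c i, c (i + 1)) ≠ p

/-- `E_w(u)`: the indecomposable elements of `Ẽ_w(u)`. -/
def Ew {n : ℕ} (w u : Equiv.Perm (Fin n)) : Set (Fin n × Fin n) :=
  {p | p ∈ Etil w u ∧ ¬ Decomposable w u p}

/-- The longest element `w₀ = n(n−1)⋯21` of `Sₙ`. -/
def w0 {n : ℕ} : Equiv.Perm (Fin n) :=
  Function.Involutive.toPerm Fin.rev Fin.rev_rev

open Finset

section Length

variable {n : ℕ}

def inversions (w : Perm (Fin n)) : Finset (Fin n × Fin n) :=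
  univ.filter fun p => p.1 < p.2 ∧ w p.2 < w p.1

lemma invCount_eq_card_inversions (w : Perm (Fin n)) : invCount w = #(inversions w) := rfl

lemma mem_inversions {w : Perm (Fin n)} {p : Fin n × Fin n} :
    p ∈ inversions w ↔ p.1 < p.2 ∧ w p.2 < w p.1 := by
  simp [inversions]

lemma swap_order_flip {i j p q : Fin n} (hij : i < j) (hpq : p < q)
    (hflip : ¬ swap i j p < swap i j q) (hne : (p, q) ≠ (i, j)) :
    (p = i ∧ i < q ∧ q < j) ∨ (i < p ∧ p < j ∧ q = j) := by
  simp only [swap_apply_def] at hflip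
  split_ifs at hflip <;> simp_all <;> omega

variable {w : Perm (Fin n)} {i j : Fin n}

def IsCoverInversion (w : Perm (Fin n)) (i j : Fin n) : Prop :=
  i < j ∧ w j < w i ∧ ∀ k, i < k → k < j → ¬(w j < w k ∧ w k < w i)

lemma IsCoverInversion.lt_iff_swap_lt (h : IsCoverInversion w i j) {p q : Fin n} (hpq : p < q)
    (hflip : ¬ swap i j p < swap i j q) (hne : (p, q) ≠ (i, j)) :
    w q < w p ↔ w (swap i j q) < w (swap i j p) := by
  obtain ⟨hij, hw, hcover⟩ := h
  rcases swap_order_flip hij hpq hflip hne with ⟨rfl, hiq, hqj⟩ | ⟨hip, hpj, rfl⟩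
  · have hq : q ≠ j := hqj.ne
    rw [swap_apply_left, swap_apply_of_ne_of_ne hiq.ne' hq]
    exact ⟨fun hqp => lt_of_le_of_ne (not_lt.1 fun hjq => hcover q hiq hqj ⟨hjq, hqp⟩)
      (w.injective.ne hq), fun hqj' => hqj'.trans hw⟩
  · have hp : p ≠ i := hip.ne'
    rw [swap_apply_right, swap_apply_of_ne_of_ne hp hpj.ne]
    exact ⟨fun hjp => lt_of_le_of_ne (not_lt.1 fun hpi => hcover p hip hpj ⟨hjp, hpi⟩)
      (w.injective.ne hp).symm, fun hip' => hw.trans hip'⟩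

def swapPair (i j : Fin n) (p : Fin n × Fin n) : Fin n × Fin n :=
  if swap i j p.1 < swap i j p.2 then Prod.map (swap i j) (swap i j) p else p

lemma swapPair_fst_lt_snd {p : Fin n × Fin n} (hp : p.1 < p.2) :
    (swapPair i j p).1 < (swapPair i j p).2 := by
  unfold swapPair
  split_ifs with h <;> simp_all

lemma swapPair_swapPair {p : Fin n × Fin n} (hp : p.1 < p.2) :
    swapPair i j (swapPair i j p) = p := by
  unfold swapPair
  split_ifs with h₁ h₂ <;> simp_all [Prod.map]

lemma swapPair_mem_inversions_iff (h : IsCoverInversion w i j) {p : Fin n × Fin n}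
    (hp : p.1 < p.2) (hne : p ≠ (i, j)) :
    swapPair i j p ∈ inversions (w * swap i j) ↔ p ∈ inversions w := by
  obtain ⟨p, q⟩ := p
  simp only at hp
  unfold swapPair
  split_ifs with hord
  · simp [mem_inversions, hord, hp]
  · simp only [mem_inversions, Perm.mul_apply, hp, true_and]
    exact (h.lt_iff_swap_lt hp hord hne).symm

/-- `swapPair i j` matches the inversions of `w` other than `(i, j)` with those of
`w * swap i j`; where `swap i j` reverses a pair, the covering condition keeps it an inversion. -/
lemma invCount_mul_swap_add_one (h : IsCoverInversion w i j) :
    invCount (w * swap i j) + 1 = invCount w := by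
  have hij_mem : (i, j) ∈ inversions w := mem_inversions.2 ⟨h.1, h.2.1⟩
  have hij_not_mem : (i, j) ∉ inversions (w * swap i j) := by
    simp [mem_inversions, h.2.1.le]
  have hswap_ij : swapPair i j (i, j) = (i, j) := by
    simp [swapPair, h.1.le]
  rw [invCount_eq_card_inversions, invCount_eq_card_inversions,
    ← card_erase_add_one hij_mem]
  congr 1
  refine (card_nbij' (swapPair i j) (swapPair i j) ?_ ?_ ?_ ?_).symm
  · intro p hp
    obtain ⟨hne, hp⟩ := mem_erase.1 hp
    exact (swapPair_mem_inversions_iff h (mem_inversions.1 hp).1 hne).2 hp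
  · intro p hp
    have hlt := (mem_inversions.1 hp).1
    have hne : swapPair i j p ≠ (i, j) := fun heq => hij_not_mem <| by
      rwa [← swapPair_swapPair hlt, heq, hswap_ij] at hp
    refine mem_erase.2 ⟨hne, (swapPair_mem_inversions_iff h (swapPair_fst_lt_snd hlt) hne).1 ?_⟩
    rwa [swapPair_swapPair hlt]
  · intro p hp
    exact swapPair_swapPair (mem_inversions.1 (mem_erase.1 hp).2).1
  · intro p hp
    exact swapPair_swapPair (mem_inversions.1 hp).1

lemma IsCoverInversion.mem_refSet (h : IsCoverInversion w i j) : (w i, w j) ∈ RefSet w :=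
  ⟨i, j, h.1, rfl, by rw [← mul_swap_eq_swap_mul]; exact invCount_mul_swap_add_one h⟩

lemma fst_ne_snd_of_mem_refSet {p : Fin n × Fin n} (hp : p ∈ RefSet w) : p.1 ≠ p.2 := by
  obtain ⟨i, j, hij, rfl, -⟩ := hp
  exact w.injective.ne hij.ne

/-- Every inversion of `w` is a chain of covering inversions. -/
theorem lt_of_inversion_of_lt_on_refSet {α : Type*} [Preorder α] {f : Fin n → α}
    (hf : ∀ a b, (a, b) ∈ RefSet w → f a < f b) {p q : Fin n} (hpq : p < q) (hw : w q < w p) :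
    f (w p) < f (w q) := by
  by_cases hcover : ∀ k, p < k → k < q → ¬(w q < w k ∧ w k < w p)
  · exact hf _ _ (IsCoverInversion.mem_refSet ⟨hpq, hw, hcover⟩)
  · push Not at hcover
    obtain ⟨k, hpk, hkq, hqk, hkp⟩ := hcover
    exact (lt_of_inversion_of_lt_on_refSet hf hpk hkp).trans
      (lt_of_inversion_of_lt_on_refSet hf hkq hqk)
termination_by (q : ℕ) - p

end Length

section Greedy

variable {n : ℕ}

lemma domLE.sum_val_le {S T : Finset (Fin n)} (h : domLE S T) :
    ∑ x ∈ S, (x : ℕ) ≤ ∑ x ∈ T, (x : ℕ) := by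
  have hval : List.Forall₂ (· ≤ ·) ((S.sort (· ≤ ·)).map Fin.val)
      ((T.sort (· ≤ ·)).map Fin.val) :=
    List.forall₂_map_left_iff.2 (List.forall₂_map_right_iff.2 h)
  have hsum (U : Finset (Fin n)) :
      ((U.sort (· ≤ ·)).map Fin.val).sum = ∑ x ∈ U, (x : ℕ) := by
    rw [((sort_perm_toList U (· ≤ ·)).map Fin.val).sum_eq, sum_map_toList]
  simpa only [hsum] using hval.sum_le_sum

lemma domLE.le_of_insert {S : Finset (Fin n)} {a b : Fin n} (ha : a ∉ S) (hb : b ∉ S)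
    (h : domLE (insert a S) (insert b S)) : a ≤ b := by
  have := h.sum_val_le
  rw [sum_insert ha, sum_insert hb] at this
  exact Fin.le_def.2 (by omega)

lemma domLE_refl (S : Finset (Fin n)) : domLE S S :=
  List.forall₂_same.2 fun x _ => le_refl x

lemma apply_mem_initSeg_iff (w : Perm (Fin n)) {i : Fin n} {d : ℕ} :
    w i ∈ initSeg w d ↔ (i : ℕ) < d := by
  simp [initSeg]

lemma initSeg_succ (w : Perm (Fin n)) (d : Fin n) :
    initSeg w ((d : ℕ) + 1) = insert (w d) (initSeg w d) := by
  ext x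
  obtain ⟨i, rfl⟩ := w.surjective x
  simp only [mem_insert, apply_mem_initSeg_iff, w.injective.eq_iff, Fin.ext_iff]
  omega

/-- The set minimised at step `d` in `GreedyRel`. -/
def greedyCandidates (w v : Perm (Fin n)) (idx : Fin n → Fin n) (d : Fin n) : Set (Fin n) :=
  {i | (∀ e : Fin n, e < d → idx e ≠ i) ∧
    domLE (insert (v i) ((univ.filter fun e : Fin n => e < d).image fun e => v (idx e)))
      (initSeg w ((d : ℕ) + 1))}

theorem greedy_index_eq {w v : Perm (Fin n)} {idx : Fin n → Fin n}
    (hinv : ∀ i j, i < j → w j < w i → v.symm (w i) < v.symm (w j))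
    (hleast : ∀ d, IsLeast (greedyCandidates w v idx d) (idx d)) (d : Fin n) :
    idx d = v.symm (w d) := by
  induction d using WellFoundedLT.induction with
  | _ d ih =>
    have hprev : (univ.filter fun e : Fin n => e < d).image (fun e => v (idx e)) = initSeg w d := by
      ext x
      simp only [initSeg, mem_image, mem_filter, mem_univ, true_and]
      constructor <;> rintro ⟨e, he, rfl⟩ <;>
        exact ⟨e, he, by rw [ih e he, apply_symm_apply]⟩
    have hcand : v.symm (w d) ∈ greedyCandidates w v idx d := by
      refine ⟨fun e he heq => he.ne ?_, ?_⟩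
      · rw [ih e he] at heq
        exact w.injective (v.symm.injective heq)
      · rw [apply_symm_apply, hprev, initSeg_succ]
        exact domLE_refl _
    have hle : idx d ≤ v.symm (w d) := (hleast d).2 hcand
    obtain ⟨hfresh, hdom⟩ := (hleast d).1
    obtain ⟨j, hj⟩ : ∃ j, w j = v (idx d) := ⟨_, w.apply_symm_apply _⟩
    have hidx : idx d = v.symm (w j) := by rw [hj, symm_apply_apply]
    have hdj : d ≤ j := not_lt.1 fun hjd => hfresh j hjd (by rw [ih j hjd, hidx])
    rw [hprev, initSeg_succ, ← hj] at hdom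
    have hwj : w j ≤ w d := hdom.le_of_insert
      ((apply_mem_initSeg_iff w).not.2 (not_lt.2 hdj))
      ((apply_mem_initSeg_iff w).not.2 (lt_irrefl _))
    rcases hdj.lt_or_eq with hdj | rfl
    · have hwj_lt : w j < w d := lt_of_le_of_ne hwj (w.injective.ne hdj.ne')
      exact absurd (hinv d j hdj hwj_lt) (not_lt.2 (hidx ▸ hle))
    · exact hidx

end Greedy

/-- If `v' ≠ w`, then there are indices `q < p` with `(v(p), v(q)) ∈ Ref(w)`;
consequently `C(v)` is not contained in `{x : x_b ≥ x_a ∀ (a,b) ∈ Ref(w)}`. -/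
theorem cone_not_subset_of_greedy_ne {n : ℕ} (w v vp : Equiv.Perm (Fin n))
    (h : GreedyRel w v vp) (hne : vp ≠ w) :
    (∃ q p : Fin n, q < p ∧ (v p, v q) ∈ RefSet w) ∧
    ¬ (∀ x ∈ coneC v, ∀ a b : Fin n, (a, b) ∈ RefSet w → x a ≤ x b) := by
  have hinverted : ∃ q p : Fin n, q < p ∧ (v p, v q) ∈ RefSet w := by
    by_contra! hcon
    obtain ⟨idx, hvp, hleast⟩ := h
    have hRef (a b : Fin n) (hab : (a, b) ∈ RefSet w) : v.symm a < v.symm b :=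
      lt_of_le_of_ne (not_lt.1 fun hlt => hcon _ _ hlt (by simpa using hab))
        (v.symm.injective.ne (fst_ne_snd_of_mem_refSet hab))
    have hidx := greedy_index_eq (fun _ _ => lt_of_inversion_of_lt_on_refSet hRef) hleast
    exact hne (ext fun d => by rw [hvp, hidx, apply_symm_apply])
  obtain ⟨q, p, hqp, hmem⟩ := hinverted
  refine ⟨⟨q, p, hqp, hmem⟩, fun hcone => ?_⟩
  have hx : (fun k => ((v.symm k : ℕ) : ℝ)) ∈ coneC v := fun a b hab => by simpa using hab
  have := hcone _ hx _ _ hmem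
  simp only [symm_apply_apply, Nat.cast_le, ← Fin.le_def] at this
  exact this.not_gt hqp

end SchubertToric
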